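/- arXiv:2206.08240 — 4 statements merged into one kernel-verified Lean document; each statement's English description precedes it below -/
import Mathlib

section
/- Let H be a real Hilbert space, A : H → H monotone and L-Lipschitz, B : H → 2^H maximal monotone, and z ∈ (A + B)⁻¹(0). Let μ > 0 and define v_{n+1} = (I + μB)⁻¹(v_n - μ(2A v_n - A v_{n-1})). Then for all n, (1/2)‖z - v_{n+1}‖² ≤ (1/2)‖z - v_n‖² + μ⟨A v_n - A v_{n-1}, z - v_n⟩ + μ⟨A v_n - A v_{n-1}, v_n - v_{n+1}⟩ + μ⟨A v_n - A v_{n+1}, z - v_{n+1}⟩ - (1/2)‖v_{n+1} - v_n‖². -/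
/-!
Monotonicity of `A + B` between the zero `z` and the point `v (n+1)` (with the element of
`B (v (n+1))` supplied by the resolvent step) bounds `⟪v n - v (n+1), v (n+1) - z⟫` from below by
`μ ⟪2 A (v n) - A (v (n-1)) - A (v (n+1)), v (n+1) - z⟫`. The three-point identity turns the left
side into squared distances; splitting the operator difference as
`(A (v n) - A (v (n-1))) + (A (v n) - A (v (n+1)))` gives the stated terms.
-/

open RealInnerProductSpace

section

variable {H : Type*} [NormedAddCommGroup H] [InnerProductSpace ℝ H]

theorem real_inner_sub_sub_eq_three_point (x w z : H) :
    ⟪x - w, w - z⟫ = (‖z - x‖ ^ 2 - ‖z - w‖ ^ 2 - ‖w - x‖ ^ 2) / 2 := by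
  have hsplit : z - x = -(x - w) - (w - z) := by abel
  rw [hsplit, norm_sub_sq_real, norm_neg, inner_neg_left, ← norm_neg (w - x), neg_sub,
    ← norm_neg (z - w), neg_sub]
  ring

variable {A : H → H} {B : H → Set H}

theorem inner_add_apply_nonneg_of_mem_of_neg_mem
    (hA : ∀ x y : H, 0 ≤ ⟪A x - A y, x - y⟫)
    (hB : ∀ x y u w : H, u ∈ B x → w ∈ B y → 0 ≤ ⟪u - w, x - y⟫)
    {u w z : H} (hu : u ∈ B w) (hz : -A z ∈ B z) :
    0 ≤ ⟪u + A w, w - z⟫ := by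
  have hsum : u + A w = (u - -A z) + (A w - A z) := by abel
  rw [hsum, inner_add_left]
  exact add_nonneg (hB _ _ _ _ hu hz) (hA w z)

theorem mul_inner_sub_apply_le_of_resolvent_step
    (hA : ∀ x y : H, 0 ≤ ⟪A x - A y, x - y⟫)
    (hB : ∀ x y u w : H, u ∈ B x → w ∈ B y → 0 ≤ ⟪u - w, x - y⟫)
    {μ : ℝ} (hμ : 0 < μ) {x d w z : H}
    (hw : (1 / μ) • (x - μ • d - w) ∈ B w) (hz : -A z ∈ B z) :
    μ * ⟪d - A w, w - z⟫ ≤ ⟪x - w, w - z⟫ := by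
  have hnonneg := inner_add_apply_nonneg_of_mem_of_neg_mem hA hB hw hz
  have hμinv : μ * (1 / μ) = 1 := mul_one_div_cancel hμ.ne'
  have hexpand : μ * ⟪(1 / μ) • (x - μ • d - w) + A w, w - z⟫
      = ⟪x - w, w - z⟫ - μ * ⟪d - A w, w - z⟫ := by
    simp only [inner_add_left, inner_sub_left, real_inner_smul_left]
    linear_combination (⟪x, w - z⟫ - μ * ⟪d, w - z⟫ - ⟪w, w - z⟫) * hμinv
  linarith [mul_nonneg hμ.le hnonneg]

end

theorem lemma41_hilbert_general
    {H : Type*} [NormedAddCommGroup H] [InnerProductSpace ℝ H]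
    (A : H → H) (B : H → Set H)
    (hA : ∀ x y : H, 0 ≤ (inner ℝ (A x - A y) (x - y) : ℝ))
    (hBmono : ∀ x y u w : H, u ∈ B x → w ∈ B y → 0 ≤ (inner ℝ (u - w) (x - y) : ℝ))
    (μ : ℝ) (hμ : 0 < μ) (z : H) (hz : -A z ∈ B z)
    (v : ℕ → H)
    (hres : ∀ n, 1 ≤ n →
      (1 / μ) • (v n - μ • ((2 : ℝ) • A (v n) - A (v (n - 1))) - v (n + 1)) ∈ B (v (n + 1))) :
    ∀ n, 1 ≤ n →
      (1 / 2) * ‖z - v (n + 1)‖ ^ 2 ≤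
        (1 / 2) * ‖z - v n‖ ^ 2
          + μ * (inner ℝ (A (v n) - A (v (n - 1))) (z - v n) : ℝ)
          + μ * (inner ℝ (A (v n) - A (v (n - 1))) (v n - v (n + 1)) : ℝ)
          + μ * (inner ℝ (A (v n) - A (v (n + 1))) (z - v (n + 1)) : ℝ)
          - (1 / 2) * ‖v (n + 1) - v n‖ ^ 2 := by
  intro n hn
  have hstep := mul_inner_sub_apply_le_of_resolvent_step hA hBmono hμ (hres n hn) hz
  rw [real_inner_sub_sub_eq_three_point] at hstep
  have hsplit : (2 : ℝ) • A (v n) - A (v (n - 1)) - A (v (n + 1))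
      = (A (v n) - A (v (n - 1))) + (A (v n) - A (v (n + 1))) := by
    rw [two_smul]; abel
  have hfirst : ∀ a : H, ⟪a, v (n + 1) - z⟫ = -⟪a, z - v n⟫ - ⟪a, v n - v (n + 1)⟫ := by
    intro a
    rw [← neg_add', ← inner_add_right, ← inner_neg_right]
    congr 1; abel
  have hsecond : ∀ a : H, ⟪a, v (n + 1) - z⟫ = -⟪a, z - v (n + 1)⟫ := by
    intro a
    rw [← inner_neg_right, neg_sub]
  rw [hsplit, inner_add_left, hfirst, hsecond] at hstep
  linarith

/-- Lemma 4.1 specialized to a Hilbert space (`g = ½‖·‖²`). -/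
theorem lemma41_hilbert
    {H : Type*} [NormedAddCommGroup H] [InnerProductSpace ℝ H]
    (A : H → H) (B : H → Set H)
    (hA : ∀ x y : H, 0 ≤ (inner ℝ (A x - A y) (x - y) : ℝ))
    (hBmono : ∀ x y u w : H, u ∈ B x → w ∈ B y → 0 ≤ (inner ℝ (u - w) (x - y) : ℝ))
    (hBmax : ∀ x u : H, (∀ y w : H, w ∈ B y → 0 ≤ (inner ℝ (u - w) (x - y) : ℝ)) → u ∈ B x)
    (μ : ℝ) (hμ : 0 < μ) (z : H) (hz : -A z ∈ B z)
    (v : ℕ → H)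
    (hres : ∀ n, 1 ≤ n →
      (1 / μ) • (v n - μ • ((2 : ℝ) • A (v n) - A (v (n - 1))) - v (n + 1)) ∈ B (v (n + 1))) :
    ∀ n, 1 ≤ n →
      (1 / 2) * ‖z - v (n + 1)‖ ^ 2 ≤
        (1 / 2) * ‖z - v n‖ ^ 2
          + μ * (inner ℝ (A (v n) - A (v (n - 1))) (z - v n) : ℝ)
          + μ * (inner ℝ (A (v n) - A (v (n - 1))) (v n - v (n + 1)) : ℝ)
          + μ * (inner ℝ (A (v n) - A (v (n + 1))) (z - v (n + 1)) : ℝ)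
          - (1 / 2) * ‖v (n + 1) - v n‖ ^ 2 :=
  lemma41_hilbert_general A B hA hBmono μ hμ z hz v hres
end

section
/- Under the hypotheses of Lemma 4.1 in a Hilbert space with μ ∈ [δ, (1-2δ)/(2L)], δ ∈ (0,1/2), the sequence s_n := ½‖z - v_n‖² + μ⟨A v_n - A v_{n-1}, z - v_n⟩ + ¼‖v_n - v_{n-1}‖² satisfies s_{n+1} ≤ s_n - δ·½‖v_{n+1} - v_n‖² for all n ≥ 1; consequently ‖v_{n+1} - v_n‖ → 0 and (v_n) is bounded. -/
open Filter Topology Finset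
open scoped RealInnerProductSpace

/-! For the forward-reflected-backward iteration the quantity
`½‖z - x‖² + μ⟪A x - A y, z - x⟫ + ¼‖x - y‖²` (current iterate `x`, previous one `y`) is a
Lyapunov function.  Monotonicity of `B` at the new iterate `w` and at the zero `z`, plus
monotonicity of `A`, give the three-point inequality; the remaining cross term
`μ⟪A x - A y, x - w⟫` is absorbed by Lipschitz continuity and AM-GM, leaving a decrease of
`(½ - μL)/2 ‖w - x‖² ≥ δ/2 ‖w - x‖²`.  Since `μ L ≤ ½` also makes the Lyapunov function dominate
`¼‖z - x‖²`, it is nonnegative: the decreases are summable, so the steps tend to zero, and the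
iterates stay in a ball around `z`. -/

theorem tendsto_atTop_zero_of_add_mul_sq_le {s d : ℕ → ℝ} {c : ℝ} (hc : 0 < c)
    (hs : ∀ n, 0 ≤ s n) (hd : ∀ n, 0 ≤ d n) (h : ∀ n, s (n + 1) + c * d n ^ 2 ≤ s n) :
    Tendsto d atTop (𝓝 0) := by
  have hsum : Summable fun n => c * d n ^ 2 :=
    summable_of_sum_range_le (fun n => by positivity) (c := s 0) fun n =>
      calc ∑ i ∈ range n, c * d i ^ 2 ≤ ∑ i ∈ range n, (s i - s (i + 1)) :=
            sum_le_sum fun i _ => by linarith [h i]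
        _ = s 0 - s n := sum_range_sub' s n
        _ ≤ s 0 := by linarith [hs n]
  have hsq := (hsum.tendsto_atTop_zero.const_mul c⁻¹).sqrt
  simp only [mul_zero, Real.sqrt_zero, inv_mul_cancel_left₀ hc.ne'] at hsq
  exact hsq.congr fun n => Real.sqrt_sq (hd n)

section ForwardReflectedBackward

variable {H : Type*} [NormedAddCommGroup H] [InnerProductSpace ℝ H]

theorem real_inner_sub_sub_three_point (x w z : H) :
    ⟪x - w, w - z⟫ = 1 / 2 * ‖x - z‖ ^ 2 - 1 / 2 * ‖w - z‖ ^ 2 - 1 / 2 * ‖w - x‖ ^ 2 := by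
  simp only [norm_sub_sq_real, inner_sub_left, inner_sub_right, real_inner_self_eq_norm_sq,
    real_inner_comm x w]
  ring

theorem real_inner_sub_le_of_lipschitz {A : H → H} {L : ℝ} (hL : 0 ≤ L)
    (hlip : ∀ x y : H, ‖A x - A y‖ ≤ L * ‖x - y‖) (x y u : H) :
    ⟪A x - A y, u⟫ ≤ L / 2 * (‖x - y‖ ^ 2 + ‖u‖ ^ 2) :=
  calc ⟪A x - A y, u⟫ ≤ ‖A x - A y‖ * ‖u‖ := real_inner_le_norm _ _
    _ ≤ L * ‖x - y‖ * ‖u‖ := by gcongr; exact hlip x y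
    _ ≤ L / 2 * (‖x - y‖ ^ 2 + ‖u‖ ^ 2) := by
      nlinarith [mul_nonneg hL (sq_nonneg (‖x - y‖ - ‖u‖))]

noncomputable def frbLyapunov (A : H → H) (μ : ℝ) (z x y : H) : ℝ :=
  1 / 2 * ‖z - x‖ ^ 2 + μ * ⟪A x - A y, z - x⟫ + 1 / 4 * ‖x - y‖ ^ 2

variable {A : H → H} {B : H → Set H} {L μ : ℝ} {z : H}

theorem quarter_norm_sq_le_frbLyapunov (hμ : 0 ≤ μ) (hL : 0 ≤ L) (hμL : μ * L ≤ 1 / 2)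
    (hlip : ∀ x y : H, ‖A x - A y‖ ≤ L * ‖x - y‖) (x y : H) :
    1 / 4 * ‖z - x‖ ^ 2 ≤ frbLyapunov A μ z x y := by
  have hcross := mul_le_mul_of_nonneg_left
    (real_inner_sub_le_of_lipschitz hL hlip x y (x - z)) hμ
  rw [← neg_sub z x, inner_neg_right, norm_neg] at hcross
  unfold frbLyapunov
  nlinarith [mul_le_mul_of_nonneg_right hμL (add_nonneg (sq_nonneg ‖x - y‖) (sq_nonneg ‖z - x‖))]

theorem frbLyapunov_add_le (hμ : 0 < μ)
    (hA : ∀ x y : H, 0 ≤ ⟪A x - A y, x - y⟫)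
    (hBmono : ∀ x y u w : H, u ∈ B x → w ∈ B y → 0 ≤ ⟪u - w, x - y⟫)
    (hz : -A z ∈ B z) {x y w : H}
    (hw : (1 / μ) • (x - μ • ((2 : ℝ) • A x - A y) - w) ∈ B w) :
    frbLyapunov A μ z w x + 1 / 4 * ‖w - x‖ ^ 2 + 1 / 4 * ‖x - y‖ ^ 2
      ≤ frbLyapunov A μ z x y + μ * ⟪A x - A y, x - w⟫ := by
  have hB := mul_nonneg hμ.le (hBmono w z _ _ hw hz)
  have hAwz := mul_nonneg hμ.le (hA w z)
  have expand : μ * ⟪(1 / μ) • (x - μ • ((2 : ℝ) • A x - A y) - w) - -A z, w - z⟫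
        + μ * ⟪A w - A z, w - z⟫
      = ⟪x - w, w - z⟫ + μ * (⟪A x - A y, x - w⟫ + ⟪A x - A y, z - x⟫ - ⟪A w - A x, z - w⟫) := by
    simp only [inner_sub_left, inner_sub_right, inner_neg_left, real_inner_smul_left]
    field_simp
    ring
  rw [real_inner_sub_sub_three_point] at expand
  unfold frbLyapunov
  rw [norm_sub_rev z w, norm_sub_rev z x]
  linarith

theorem frbLyapunov_step_le (hμ : 0 < μ) (hL : 0 ≤ L) (hμL : μ * L ≤ 1 / 2)
    (hA : ∀ x y : H, 0 ≤ ⟪A x - A y, x - y⟫)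
    (hlip : ∀ x y : H, ‖A x - A y‖ ≤ L * ‖x - y‖)
    (hBmono : ∀ x y u w : H, u ∈ B x → w ∈ B y → 0 ≤ ⟪u - w, x - y⟫)
    (hz : -A z ∈ B z) {x y w : H}
    (hw : (1 / μ) • (x - μ • ((2 : ℝ) • A x - A y) - w) ∈ B w) :
    frbLyapunov A μ z w x + (1 / 2 - μ * L) / 2 * ‖w - x‖ ^ 2 ≤ frbLyapunov A μ z x y := by
  have hcross := mul_le_mul_of_nonneg_left
    (real_inner_sub_le_of_lipschitz hL hlip x y (x - w)) hμ.le
  rw [norm_sub_rev x w] at hcross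
  nlinarith [frbLyapunov_add_le hμ hA hBmono hz hw,
    mul_le_mul_of_nonneg_right hμL (sq_nonneg ‖x - y‖)]

end ForwardReflectedBackward

theorem key_estimate_and_consequences_general
    {H : Type*} [NormedAddCommGroup H] [InnerProductSpace ℝ H]
    (A : H → H) (B : H → Set H) (L δ μ : ℝ)
    (hδ0 : 0 < δ) (hL : 0 < L)
    (hμl : δ ≤ μ) (hμu : μ ≤ (1 - 2 * δ) / (2 * L))
    (hA : ∀ x y : H, 0 ≤ (inner ℝ (A x - A y) (x - y) : ℝ))
    (hlip : ∀ x y : H, ‖A x - A y‖ ≤ L * ‖x - y‖)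
    (hBmono : ∀ x y u w : H, u ∈ B x → w ∈ B y → 0 ≤ (inner ℝ (u - w) (x - y) : ℝ))
    (z : H) (hz : -A z ∈ B z)
    (v : ℕ → H)
    (hres : ∀ n, 1 ≤ n →
      (1 / μ) • (v n - μ • ((2 : ℝ) • A (v n) - A (v (n - 1))) - v (n + 1)) ∈ B (v (n + 1)))
    (s : ℕ → ℝ)
    (hs : ∀ n, s n = (1 / 2) * ‖z - v n‖ ^ 2
      + μ * (inner ℝ (A (v n) - A (v (n - 1))) (z - v n) : ℝ)
      + (1 / 4) * ‖v n - v (n - 1)‖ ^ 2) :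
    (∀ n, 1 ≤ n → s (n + 1) ≤ s n - δ * ((1 / 2) * ‖v (n + 1) - v n‖ ^ 2)) ∧
      Tendsto (fun n => ‖v (n + 1) - v n‖) atTop (nhds 0) ∧
      ∃ M : ℝ, ∀ n, ‖v n‖ ≤ M := by
  have hμ : 0 < μ := hδ0.trans_le hμl
  have hμL : μ * L ≤ 1 / 2 - δ := by
    rw [le_div_iff₀ (by positivity)] at hμu
    linarith
  have hs' : ∀ n, s n = frbLyapunov A μ z (v n) (v (n - 1)) := hs
  have step : ∀ n, 1 ≤ n → s (n + 1) ≤ s n - δ * ((1 / 2) * ‖v (n + 1) - v n‖ ^ 2) := by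
    intro n hn
    have h := frbLyapunov_step_le hμ hL.le (by linarith) hA hlip hBmono hz (hres n hn)
    rw [hs', hs', Nat.add_sub_cancel]
    nlinarith [mul_le_mul_of_nonneg_right hμL (sq_nonneg ‖v (n + 1) - v n‖)]
  have lower : ∀ n, 1 / 4 * ‖z - v n‖ ^ 2 ≤ s n := fun n =>
    hs' n ▸ quarter_norm_sq_le_frbLyapunov hμ.le hL.le (by linarith) hlip _ _
  have decrease : ∀ n, s (n + 2) + δ / 2 * ‖v (n + 2) - v (n + 1)‖ ^ 2 ≤ s (n + 1) :=
    fun n => by linarith [step (n + 1) (by omega)]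
  have hanti : Antitone fun n => s (n + 1) := antitone_nat_of_succ_le fun n => by
    nlinarith [decrease n, sq_nonneg ‖v (n + 2) - v (n + 1)‖]
  have bounded : ∀ n, s n ≤ max (s 0) (s 1)
    | 0 => le_max_left _ _
    | m + 1 => (hanti (Nat.zero_le m)).trans (le_max_right _ _)
  refine ⟨step, (tendsto_add_atTop_iff_nat 1).mp ?_, ‖z‖ + √(4 * max (s 0) (s 1)), fun n => ?_⟩
  · exact tendsto_atTop_zero_of_add_mul_sq_le (half_pos hδ0)
      (fun n => le_trans (by positivity) (lower (n + 1))) (fun n => norm_nonneg _) decrease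
  · have hball := Real.abs_le_sqrt (x := ‖z - v n‖) (y := 4 * max (s 0) (s 1))
      (by linarith [lower n, bounded n])
    linarith [norm_le_norm_add_norm_sub z (v n), le_abs_self ‖z - v n‖]

/-- The key estimate (4.8*) of Theorem 4.2 together with its consequences:
`‖v (n+1) - v n‖ → 0` and boundedness of `(v n)`. -/
theorem key_estimate_and_consequences
    {H : Type*} [NormedAddCommGroup H] [InnerProductSpace ℝ H]
    (A : H → H) (B : H → Set H) (L δ μ : ℝ)
    (hδ0 : 0 < δ) (hδ1 : δ < 1 / 2) (hL : 0 < L)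
    (hμl : δ ≤ μ) (hμu : μ ≤ (1 - 2 * δ) / (2 * L))
    (hA : ∀ x y : H, 0 ≤ (inner ℝ (A x - A y) (x - y) : ℝ))
    (hlip : ∀ x y : H, ‖A x - A y‖ ≤ L * ‖x - y‖)
    (hBmono : ∀ x y u w : H, u ∈ B x → w ∈ B y → 0 ≤ (inner ℝ (u - w) (x - y) : ℝ))
    (hBmax : ∀ x u : H, (∀ y w : H, w ∈ B y → 0 ≤ (inner ℝ (u - w) (x - y) : ℝ)) → u ∈ B x)
    (z : H) (hz : -A z ∈ B z)
    (v : ℕ → H)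
    (hres : ∀ n, 1 ≤ n →
      (1 / μ) • (v n - μ • ((2 : ℝ) • A (v n) - A (v (n - 1))) - v (n + 1)) ∈ B (v (n + 1)))
    (s : ℕ → ℝ)
    (hs : ∀ n, s n = (1 / 2) * ‖z - v n‖ ^ 2
      + μ * (inner ℝ (A (v n) - A (v (n - 1))) (z - v n) : ℝ)
      + (1 / 4) * ‖v n - v (n - 1)‖ ^ 2) :
    (∀ n, 1 ≤ n → s (n + 1) ≤ s n - δ * ((1 / 2) * ‖v (n + 1) - v n‖ ^ 2)) ∧
      Tendsto (fun n => ‖v (n + 1) - v n‖) atTop (nhds 0) ∧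
      ∃ M : ℝ, ∀ n, ‖v n‖ ≤ M :=
  key_estimate_and_consequences_general A B L δ μ hδ0 hL hμl hμu hA hlip hBmono z hz v hres s hs
end

section
/- Let H be a real Hilbert space, A : H → H monotone and L-Lipschitz continuous, B : H → 2^H maximal monotone with (A+B)⁻¹(0) ≠ ∅, and μ ∈ [δ, (1-2δ)/(2L)] for some δ ∈ (0, 1/2). Then the sequence v_{n+1} = (I + μB)⁻¹(v_n - μ(2Av_n - Av_{n-1})), v₀, v₁ ∈ H arbitrary, converges weakly to some u ∈ (A+B)⁻¹(0). -/
/-!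
For every zero `z` of `A + B` the energy
`‖v (n+1) - z‖² + 2μ⟪A v (n+1) - A v n, z - v (n+1)⟫ + μL‖v (n+1) - v n‖²`
decreases by at least `(1 - 2μL)‖v (n+2) - v (n+1)‖²` at each step: this is monotonicity of `B`
at the resolvent step and of `A`, with the Lipschitz bound and Young's inequality absorbing the
reflected term `A v (n+1) - A v n`. So the steps are square-summable, the iterates are bounded and
`‖v n - z‖` converges. Along a weakly convergent subsequence `v (n+2) ⇀ u` the resolvent produces
`b n ∈ B (v (n+2))` with `b n + A (v (n+2)) → 0` strongly; after passing to a further subsequence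
with `A (v (n+2)) ⇀ a`, maximality of `B` gives `-a ∈ B u`, and Minty's trick for the continuous
monotone `A` gives `a = A u`. Opial's lemma then yields weak convergence of the whole sequence.
-/

open Filter Topology Set Bornology
open scoped RealInnerProductSpace

section WeakConvergence

variable {H : Type*} [NormedAddCommGroup H] [InnerProductSpace ℝ H]

def TendstoWeakly {ι : Type*} (x : ι → H) (l : Filter ι) (u : H) : Prop :=
  ∀ y, Tendsto (fun i => ⟪x i, y⟫) l (𝓝 ⟪u, y⟫)

variable {ι κ : Type*} {x y : ι → H} {l : Filter ι} {u : H}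

theorem TendstoWeakly.comp (h : TendstoWeakly x l u) {f : κ → ι} {l' : Filter κ}
    (hf : Tendsto f l' l) : TendstoWeakly (x ∘ f) l' u :=
  fun z => (h z).comp hf

theorem TendstoWeakly.tendsto_inner_left (h : TendstoWeakly x l u) (c : H) :
    Tendsto (fun i => ⟪c, x i⟫) l (𝓝 ⟪c, u⟫) := by
  simpa only [real_inner_comm c] using h c

theorem TendstoWeakly.sub_const (h : TendstoWeakly x l u) (c : H) :
    TendstoWeakly (fun i => x i - c) l (u - c) := fun z => by
  simpa only [inner_sub_left] using (h z).sub_const ⟪c, z⟫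

theorem TendstoWeakly.congr_tendsto_sub (h : TendstoWeakly x l u)
    (hxy : Tendsto (fun i => y i - x i) l (𝓝 0)) : TendstoWeakly y l u := fun z => by
  have := (h z).add (hxy.inner (tendsto_const_nhds (x := z)))
  simpa only [inner_sub_left, inner_zero_left, add_zero, add_sub_cancel] using this

theorem tendsto_inner_sub_zero_of_isBounded {e : ι → H} (he : Tendsto e l (𝓝 0))
    (hx : IsBounded (range x)) (c : H) : Tendsto (fun i => ⟪e i, x i - c⟫) l (𝓝 0) := by
  obtain ⟨M, hM⟩ := isBounded_iff_forall_norm_le.mp hx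
  refine squeeze_zero_norm (a := fun i => ‖e i‖ * (M + ‖c‖)) (fun i => ?_) ?_
  · refine (norm_inner_le_norm _ _).trans (mul_le_mul_of_nonneg_left ?_ (norm_nonneg _))
    exact (norm_sub_le _ _).trans (add_le_add_left (hM _ ⟨i, rfl⟩) _)
  · simpa using he.norm.mul_const (M + ‖c‖)

theorem exists_strictMono_tendstoWeakly [CompleteSpace H] {x : ℕ → H}
    (hx : IsBounded (range x)) :
    ∃ (φ : ℕ → ℕ) (u : H), StrictMono φ ∧ TendstoWeakly (x ∘ φ) atTop u := by
  obtain ⟨M, hM⟩ := isBounded_iff_forall_norm_le.mp hx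
  -- Sequential Banach–Alaoglu in the separable closed span `D` of the sequence, which the Riesz
  -- map identifies with its dual.
  let D := (Submodule.span ℝ (range x)).topologicalClosure
  have hxD (n : ℕ) : x n ∈ D :=
    Submodule.le_topologicalClosure _ (Submodule.subset_span ⟨n, rfl⟩)
  have : CompleteSpace D := (Submodule.isClosed_topologicalClosure _).completeSpace_coe
  have : TopologicalSpace.SeparableSpace D := by
    refine TopologicalSpace.IsSeparable.separableSpace ?_
    rw [Submodule.topologicalClosure_coe]
    exact (countable_range x).isSeparable.span.closure
  let f (n : ℕ) : WeakDual ℝ D :=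
    StrongDual.toWeakDual (InnerProductSpace.toDual ℝ D ⟨x n, hxD n⟩)
  have hf (n : ℕ) : f n ∈ WeakDual.toStrongDual ⁻¹' Metric.closedBall 0 M := by
    rw [Set.mem_preimage, Metric.mem_closedBall]
    refine (dist_zero_right (WeakDual.toStrongDual (f n))).trans_le ?_
    simpa [f] using hM _ ⟨n, rfl⟩
  obtain ⟨g, -, φ, hφ, hlim⟩ := WeakDual.isSeqCompact_closedBall ℝ D 0 M hf
  refine ⟨φ, (InnerProductSpace.toDual ℝ D).symm (WeakDual.toStrongDual g), hφ, fun y => ?_⟩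
  have hfy (n : ℕ) : f n (D.orthogonalProjectionOnto y) = ⟪x n, y⟫ :=
    Submodule.inner_orthogonalProjectionOnto_eq_of_mem_left ⟨x n, hxD n⟩ y
  rw [← Submodule.inner_orthogonalProjectionOnto_eq_of_mem_left,
    InnerProductSpace.toDual_symm_apply]
  have := ((WeakDual.eval_continuous (D.orthogonalProjectionOnto y)).tendsto g).comp hlim
  simp only [Function.comp_def, hfy] at this
  exact this

theorem eq_of_tendstoWeakly_of_tendsto_norm_sub {x : ℕ → H} {u₀ u₁ : H} {ℓ₀ ℓ₁ : ℝ}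
    {φ₀ φ₁ : ℕ → ℕ} (h₀ : Tendsto (fun n => ‖x n - u₀‖) atTop (𝓝 ℓ₀))
    (h₁ : Tendsto (fun n => ‖x n - u₁‖) atTop (𝓝 ℓ₁))
    (hφ₀ : Tendsto φ₀ atTop atTop) (hφ₁ : Tendsto φ₁ atTop atTop)
    (hu₀ : TendstoWeakly (x ∘ φ₀) atTop u₀) (hu₁ : TendstoWeakly (x ∘ φ₁) atTop u₁) :
    u₀ = u₁ := by
  have hpolar (n : ℕ) : ⟪x n, u₀ - u₁⟫ =
      (‖x n - u₁‖ ^ 2 - ‖x n - u₀‖ ^ 2 + ‖u₀‖ ^ 2 - ‖u₁‖ ^ 2) / 2 := by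
    rw [norm_sub_sq_real, norm_sub_sq_real, inner_sub_right]
    ring
  have hlim : Tendsto (fun n => ⟪x n, u₀ - u₁⟫) atTop
      (𝓝 ((ℓ₁ ^ 2 - ℓ₀ ^ 2 + ‖u₀‖ ^ 2 - ‖u₁‖ ^ 2) / 2)) := by
    simp_rw [hpolar]
    exact ((((h₁.pow 2).sub (h₀.pow 2)).add_const _).sub_const _).div_const 2
  have e₀ := tendsto_nhds_unique (hu₀ (u₀ - u₁)) (hlim.comp hφ₀)
  have e₁ := tendsto_nhds_unique (hu₁ (u₀ - u₁)) (hlim.comp hφ₁)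
  rw [← sub_eq_zero, ← inner_self_eq_zero (𝕜 := ℝ), inner_sub_left, e₀, e₁, sub_self]

theorem exists_tendstoWeakly_of_tendsto_norm_sub [CompleteSpace H] {x : ℕ → H} {S : Set H}
    (hS : S.Nonempty) (hdist : ∀ z ∈ S, ∃ ℓ, Tendsto (fun n => ‖x n - z‖) atTop (𝓝 ℓ))
    (hclust : ∀ (φ : ℕ → ℕ) (u : H), StrictMono φ → TendstoWeakly (x ∘ φ) atTop u → u ∈ S) :
    ∃ u ∈ S, TendstoWeakly x atTop u := by
  have hbdd : IsBounded (range x) := by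
    obtain ⟨z, hz⟩ := hS
    obtain ⟨ℓ, hℓ⟩ := hdist z hz
    obtain ⟨C, hC⟩ := hℓ.bddAbove_range
    refine isBounded_iff_forall_norm_le.mpr ⟨C + ‖z‖, ?_⟩
    rintro _ ⟨n, rfl⟩
    exact (norm_le_norm_sub_add _ z).trans (add_le_add_left (hC ⟨n, rfl⟩) _)
  obtain ⟨φ, u, hφ, hu⟩ := exists_strictMono_tendstoWeakly hbdd
  have huS := hclust φ u hφ hu
  refine ⟨u, huS, fun y => tendsto_of_subseq_tendsto fun ns hns => ?_⟩
  obtain ⟨ψ, -, hψ⟩ := strictMono_subseq_of_tendsto_atTop hns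
  obtain ⟨χ, w, hχ, hw⟩ :=
    exists_strictMono_tendstoWeakly (hbdd.subset (range_comp_subset_range (ns ∘ ψ) x))
  have hwS := hclust _ w (hψ.comp hχ) hw
  obtain ⟨ℓ, hℓ⟩ := hdist u huS
  obtain ⟨ℓ', hℓ'⟩ := hdist w hwS
  obtain rfl := eq_of_tendstoWeakly_of_tendsto_norm_sub hℓ hℓ' hφ.tendsto_atTop
    (hψ.comp hχ).tendsto_atTop hu hw
  exact ⟨ψ ∘ χ, hw y⟩

end WeakConvergence

section MonotoneOperator

variable {H : Type*} [NormedAddCommGroup H] [InnerProductSpace ℝ H]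

def IsMonotoneOperator (T : H → Set H) : Prop :=
  ∀ x y u w, u ∈ T x → w ∈ T y → 0 ≤ ⟪u - w, x - y⟫

def IsMaximalMonotone (T : H → Set H) : Prop :=
  IsMonotoneOperator T ∧ ∀ x u, (∀ y w, w ∈ T y → 0 ≤ ⟪u - w, x - y⟫) → u ∈ T x

theorem eq_of_forall_inner_sub_nonneg {A : H → H} (hAc : Continuous A) {a u : H}
    (h : ∀ y, 0 ≤ ⟪a - A y, u - y⟫) : a = A u := by
  -- Minty's trick: test at `y = u + t • (a - A u)` and let `t → 0⁺`.
  set d := a - A u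
  have hle (t : ℝ) (ht : 0 < t) : ⟪a - A (u + t • d), d⟫ ≤ 0 := by
    have := h (u + t • d)
    rw [sub_add_cancel_left, inner_neg_right, real_inner_smul_right] at this
    nlinarith
  have hlim : Tendsto (fun t : ℝ => ⟪a - A (u + t • d), d⟫) (𝓝[>] 0) (𝓝 ⟪d, d⟫) := by
    have hc : Continuous fun t : ℝ => ⟪a - A (u + t • d), d⟫ := by fun_prop
    simpa [d] using (hc.tendsto 0).mono_left nhdsWithin_le_nhds
  have hd : ⟪d, d⟫ ≤ 0 := le_of_tendsto hlim (eventually_nhdsWithin_of_forall hle)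
  exact sub_eq_zero.mp (inner_self_eq_zero.mp (le_antisymm hd real_inner_self_nonneg))

variable {A : H → H} {B : H → Set H} {a u : H}

section Filter

variable {ι : Type*} {l : Filter ι} {x b : ι → H}

theorem neg_mem_of_tendstoWeakly_apply [l.NeBot] (hA : ∀ x y, 0 ≤ ⟪A x - A y, x - y⟫)
    (hB : IsMaximalMonotone B) (hb : ∀ i, b i ∈ B (x i))
    (hres : Tendsto (fun i => b i + A (x i)) l (𝓝 0)) (hbdd : IsBounded (range x))
    (hx : TendstoWeakly x l u) (hAx : TendstoWeakly (A ∘ x) l a) : -a ∈ B u := by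
  refine hB.2 u (-a) fun y w hw => ?_
  -- Adding monotonicity of `A` at `(x i, u)` cancels `⟪A (x i), x i⟫`, a product of two weakly
  -- convergent sequences.
  have hsplit (i : ι) : ⟪b i - w, x i - y⟫ + ⟪A (x i) - A u, x i - u⟫ =
      ⟪b i + A (x i), x i - y⟫ + ⟪A (x i), y - u⟫ - ⟪w, x i - y⟫ - ⟪A u, x i - u⟫ := by
    simp only [inner_add_left, inner_sub_left, inner_sub_right]
    ring
  have hlim : Tendsto (fun i => ⟪b i - w, x i - y⟫ + ⟪A (x i) - A u, x i - u⟫) l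
      (𝓝 (0 + ⟪a, y - u⟫ - ⟪w, u - y⟫ - ⟪A u, u - u⟫)) := by
    simp_rw [hsplit]
    exact (((tendsto_inner_sub_zero_of_isBounded hres hbdd y).add (hAx (y - u))).sub
      ((hx.sub_const y).tendsto_inner_left w)).sub ((hx.sub_const u).tendsto_inner_left (A u))
  refine (ge_of_tendsto' hlim fun i => add_nonneg (hB.1 _ _ _ _ (hb i) hw) (hA (x i) u)).trans_eq ?_
  simp only [sub_self, inner_zero_right, inner_sub_left, inner_sub_right, inner_neg_left]
  ring

theorem tendsto_inner_apply_sub_apply_of_neg_mem (hA : ∀ x y, 0 ≤ ⟪A x - A y, x - y⟫)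
    (hB : IsMonotoneOperator B) (hb : ∀ i, b i ∈ B (x i))
    (hres : Tendsto (fun i => b i + A (x i)) l (𝓝 0)) (hbdd : IsBounded (range x))
    (hx : TendstoWeakly x l u) (ha : -a ∈ B u) :
    Tendsto (fun i => ⟪A (x i) - A u, x i - u⟫) l (𝓝 0) := by
  have hle (i : ι) : ⟪A (x i) - A u, x i - u⟫ ≤ ⟪b i + A (x i), x i - u⟫ + ⟪a - A u, x i - u⟫ := by
    have hsplit : ⟪b i + A (x i), x i - u⟫ + ⟪a - A u, x i - u⟫ =
        ⟪b i - -a, x i - u⟫ + ⟪A (x i) - A u, x i - u⟫ := by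
      simp only [inner_add_left, inner_sub_left, inner_neg_left]
      ring
    linarith [hB _ _ _ _ (hb i) ha]
  have hup : Tendsto (fun i => ⟪b i + A (x i), x i - u⟫ + ⟪a - A u, x i - u⟫) l (𝓝 0) := by
    simpa using (tendsto_inner_sub_zero_of_isBounded hres hbdd u).add
      ((hx.sub_const u).tendsto_inner_left (a - A u))
  exact tendsto_of_tendsto_of_tendsto_of_le_of_le tendsto_const_nhds hup (fun i => hA _ _) hle

theorem neg_apply_mem_of_tendstoWeakly_apply [l.NeBot] (hA : ∀ x y, 0 ≤ ⟪A x - A y, x - y⟫)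
    (hAc : Continuous A) (hB : IsMaximalMonotone B) (hb : ∀ i, b i ∈ B (x i))
    (hres : Tendsto (fun i => b i + A (x i)) l (𝓝 0)) (hbdd : IsBounded (range x))
    (hx : TendstoWeakly x l u) (hAx : TendstoWeakly (A ∘ x) l a) : -A u ∈ B u := by
  have ha := neg_mem_of_tendstoWeakly_apply hA hB hb hres hbdd hx hAx
  have hgap := tendsto_inner_apply_sub_apply_of_neg_mem hA hB.1 hb hres hbdd hx ha
  suffices a = A u from this ▸ ha
  refine eq_of_forall_inner_sub_nonneg hAc fun y => ?_
  have hsplit (i : ι) : ⟪A (x i) - A y, x i - y⟫ = ⟪A (x i) - A u, x i - u⟫ +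
      ⟪A u - A y, x i - u⟫ + ⟪A (x i), u - y⟫ - ⟪A y, u - y⟫ := by
    simp only [inner_sub_left, inner_sub_right]
    ring
  have hlim : Tendsto (fun i => ⟪A (x i) - A y, x i - y⟫) l
      (𝓝 (0 + ⟪A u - A y, u - u⟫ + ⟪a, u - y⟫ - ⟪A y, u - y⟫)) := by
    simp_rw [hsplit]
    exact ((hgap.add ((hx.sub_const u).tendsto_inner_left _)).add (hAx (u - y))).sub_const _
  refine (ge_of_tendsto' hlim fun i => hA _ _).trans_eq ?_
  simp only [sub_self, inner_zero_right, inner_sub_left]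
  ring

end Filter

theorem neg_apply_mem_of_tendstoWeakly [CompleteSpace H] {x b : ℕ → H}
    (hA : ∀ x y, 0 ≤ ⟪A x - A y, x - y⟫) (hAc : Continuous A) (hB : IsMaximalMonotone B)
    (hb : ∀ n, b n ∈ B (x n)) (hres : Tendsto (fun n => b n + A (x n)) atTop (𝓝 0))
    (hbdd : IsBounded (range x)) (hAbdd : IsBounded (range (A ∘ x)))
    (hx : TendstoWeakly x atTop u) : -A u ∈ B u := by
  obtain ⟨φ, a, hφ, ha⟩ := exists_strictMono_tendstoWeakly hAbdd
  exact neg_apply_mem_of_tendstoWeakly_apply (x := x ∘ φ) (b := b ∘ φ) hA hAc hB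
    (fun n => hb (φ n)) (hres.comp hφ.tendsto_atTop)
    (hbdd.subset (range_comp_subset_range φ x)) (hx.comp hφ.tendsto_atTop) ha

end MonotoneOperator

theorem summable_and_exists_tendsto_of_add_le {Φ d : ℕ → ℝ} (hΦ : ∀ n, 0 ≤ Φ n)
    (hd : ∀ n, 0 ≤ d n) (h : ∀ n, Φ (n + 1) + d n ≤ Φ n) :
    Summable d ∧ ∃ ℓ, Tendsto Φ atTop (𝓝 ℓ) := by
  have htel (N : ℕ) : ∑ n ∈ Finset.range N, d n + Φ N ≤ Φ 0 := by
    induction N with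
    | zero => simp
    | succ N ih => rw [Finset.sum_range_succ]; linarith [h N]
  refine ⟨summable_of_sum_range_le hd fun N => by linarith [htel N, hΦ N], _,
    tendsto_atTop_ciInf (antitone_nat_of_succ_le fun n => ?_) ⟨0, ?_⟩⟩
  · linarith [h n, hd n]
  · rintro _ ⟨n, rfl⟩
    exact hΦ n

section ForwardReflectedBackward

variable {H : Type*} [NormedAddCommGroup H] [InnerProductSpace ℝ H]
  {A : H → H} {B : H → Set H} {μ L : ℝ} {z x₀ x₁ x₂ : H}

-- `x₂ = (I + μB)⁻¹ (x₁ - μ • (2 • A x₁ - A x₀))` iff `frbResidual A μ x₀ x₁ x₂ ∈ B x₂`.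
noncomputable def frbResidual (A : H → H) (μ : ℝ) (x₀ x₁ x₂ : H) : H :=
  (1 / μ) • (x₁ - μ • ((2 : ℝ) • A x₁ - A x₀) - x₂)

def frbEnergy (A : H → H) (μ L : ℝ) (z x₀ x₁ : H) : ℝ :=
  ‖x₁ - z‖ ^ 2 + 2 * μ * ⟪A x₁ - A x₀, z - x₁⟫ + μ * L * ‖x₁ - x₀‖ ^ 2

theorem frbResidual_eq (hμ : μ ≠ 0) :
    frbResidual A μ x₀ x₁ x₂ = (1 / μ) • (x₁ - x₂) - ((2 : ℝ) • A x₁ - A x₀) := by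
  rw [frbResidual, sub_right_comm, smul_sub, smul_smul, one_div_mul_cancel hμ, one_smul]

theorem mul_norm_sub_sq_le_frbEnergy (hμ : 0 ≤ μ) (hL : 0 ≤ L)
    (hlip : ‖A x₁ - A x₀‖ ≤ L * ‖x₁ - x₀‖) :
    (1 - μ * L) * ‖x₁ - z‖ ^ 2 ≤ frbEnergy A μ L z x₀ x₁ := by
  have hcross : -(L * ‖x₁ - x₀‖ * ‖x₁ - z‖) ≤ ⟪A x₁ - A x₀, z - x₁⟫ := by
    rw [← norm_sub_rev z]
    exact neg_le_of_abs_le ((abs_real_inner_le_norm _ _).trans (by gcongr))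
  unfold frbEnergy
  nlinarith [mul_le_mul_of_nonneg_left hcross hμ,
    mul_nonneg (mul_nonneg hμ hL) (sq_nonneg (‖x₁ - x₀‖ - ‖x₁ - z‖))]

theorem frbEnergy_add_le (hμ : 0 ≤ μ) (hL : 0 ≤ L)
    (hstep : 0 ≤ ⟪x₁ - x₂ - μ • ((2 : ℝ) • A x₁ - A x₀ - A z), x₂ - z⟫)
    (hmono : 0 ≤ ⟪A x₂ - A z, x₂ - z⟫) (hlip : ‖A x₁ - A x₀‖ ≤ L * ‖x₁ - x₀‖) :
    frbEnergy A μ L z x₁ x₂ + (1 - 2 * (μ * L)) * ‖x₂ - x₁‖ ^ 2 ≤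
      frbEnergy A μ L z x₀ x₁ := by
  have hpolar : 2 * ⟪x₁ - x₂, x₂ - z⟫ = ‖x₁ - z‖ ^ 2 - ‖x₂ - z‖ ^ 2 - ‖x₂ - x₁‖ ^ 2 := by
    rw [← sub_add_sub_cancel x₁ x₂ z, norm_add_sq_real, norm_sub_rev x₂ x₁]
    ring
  have hsplit : ⟪x₁ - x₂ - μ • ((2 : ℝ) • A x₁ - A x₀ - A z), x₂ - z⟫ =
      ⟪x₁ - x₂, x₂ - z⟫ - μ * (⟪A x₂ - A z, x₂ - z⟫ + ⟪A x₁ - A x₀, x₂ - x₁⟫ -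
        ⟪A x₁ - A x₀, z - x₁⟫ + ⟪A x₂ - A x₁, z - x₂⟫) := by
    simp only [inner_sub_left, inner_sub_right, real_inner_smul_left, two_smul, inner_add_left]
    ring
  have hcross : -(L * ‖x₁ - x₀‖ * ‖x₂ - x₁‖) ≤ ⟪A x₁ - A x₀, x₂ - x₁⟫ :=
    neg_le_of_abs_le ((abs_real_inner_le_norm _ _).trans (by gcongr))
  unfold frbEnergy
  nlinarith [mul_nonneg hμ hmono, mul_le_mul_of_nonneg_left hcross hμ,
    mul_nonneg (mul_nonneg hμ hL) (sq_nonneg (‖x₁ - x₀‖ - ‖x₂ - x₁‖))]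

structure IsFRBSequence (A : H → H) (B : H → Set H) (μ L : ℝ) (v : ℕ → H) : Prop where
  monotone_A : ∀ x y, 0 ≤ ⟪A x - A y, x - y⟫
  lipschitz_A : ∀ x y, ‖A x - A y‖ ≤ L * ‖x - y‖
  monotone_B : IsMonotoneOperator B
  step_pos : 0 < μ
  nonneg_L : 0 ≤ L
  step_mul_lt : 2 * (μ * L) < 1
  residual_mem : ∀ n, frbResidual A μ (v n) (v (n + 1)) (v (n + 2)) ∈ B (v (n + 2))

namespace IsFRBSequence

variable {v : ℕ → H}

theorem lipschitzWith (hv : IsFRBSequence A B μ L v) : LipschitzWith (Real.toNNReal L) A :=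
  LipschitzWith.of_dist_le' fun x y => by simpa only [dist_eq_norm] using hv.lipschitz_A x y

theorem frbEnergy_succ_add_le (hv : IsFRBSequence A B μ L v) (hz : -A z ∈ B z) (n : ℕ) :
    frbEnergy A μ L z (v (n + 1)) (v (n + 2)) + (1 - 2 * (μ * L)) * ‖v (n + 2) - v (n + 1)‖ ^ 2 ≤
      frbEnergy A μ L z (v n) (v (n + 1)) := by
  refine frbEnergy_add_le hv.step_pos.le hv.nonneg_L ?_ (hv.monotone_A _ z) (hv.lipschitz_A _ _)
  have hscale : v (n + 1) - v (n + 2) - μ • ((2 : ℝ) • A (v (n + 1)) - A (v n) - A z) =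
      μ • (frbResidual A μ (v n) (v (n + 1)) (v (n + 2)) - -A z) := by
    rw [frbResidual_eq hv.step_pos.ne', sub_neg_eq_add, smul_add, smul_sub μ ((1 / μ) • _),
      smul_smul, mul_one_div_cancel hv.step_pos.ne', one_smul, smul_sub μ _ (A z)]
    abel
  rw [hscale, real_inner_smul_left]
  exact mul_nonneg hv.step_pos.le (hv.monotone_B _ _ _ _ (hv.residual_mem n) hz)

theorem summable_and_exists_tendsto_frbEnergy (hv : IsFRBSequence A B μ L v) (hz : -A z ∈ B z) :
    Summable (fun n => (1 - 2 * (μ * L)) * ‖v (n + 2) - v (n + 1)‖ ^ 2) ∧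
      ∃ ℓ, Tendsto (fun n => frbEnergy A μ L z (v n) (v (n + 1))) atTop (𝓝 ℓ) :=
  summable_and_exists_tendsto_of_add_le
    (fun n => (mul_nonneg (by linarith [hv.step_mul_lt]) (sq_nonneg _)).trans
      (mul_norm_sub_sq_le_frbEnergy hv.step_pos.le hv.nonneg_L (hv.lipschitz_A _ _)))
    (fun n => mul_nonneg (by linarith [hv.step_mul_lt]) (sq_nonneg _))
    (hv.frbEnergy_succ_add_le hz)

theorem tendsto_sub_succ (hv : IsFRBSequence A B μ L v) (hz : -A z ∈ B z) :
    Tendsto (fun n => v (n + 1) - v n) atTop (𝓝 0) := by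
  have hc : 0 < 1 - 2 * (μ * L) := by linarith [hv.step_mul_lt]
  have h := ((hv.summable_and_exists_tendsto_frbEnergy hz).1.tendsto_atTop_zero.div_const
    (1 - 2 * (μ * L))).sqrt
  simp only [mul_div_cancel_left₀ _ hc.ne', Real.sqrt_sq (norm_nonneg _), zero_div,
    Real.sqrt_zero] at h
  exact (tendsto_add_atTop_iff_nat 1).mp (tendsto_zero_iff_norm_tendsto_zero.mpr h)

theorem isBounded_range (hv : IsFRBSequence A B μ L v) (hz : -A z ∈ B z) :
    IsBounded (range v) := by
  have hc : 0 < 1 - μ * L := by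
    linarith [hv.step_mul_lt, mul_nonneg hv.step_pos.le hv.nonneg_L]
  obtain ⟨ℓ, hℓ⟩ := (hv.summable_and_exists_tendsto_frbEnergy hz).2
  obtain ⟨C, hC⟩ := hℓ.bddAbove_range
  have hsq (n : ℕ) : ‖v (n + 1) - z‖ ^ 2 ≤ C / (1 - μ * L) := by
    rw [le_div_iff₀ hc, mul_comm]
    exact (mul_norm_sub_sq_le_frbEnergy hv.step_pos.le hv.nonneg_L (hv.lipschitz_A _ _)).trans
      (hC ⟨n, rfl⟩)
  refine isBounded_iff_forall_norm_le.mpr ⟨max ‖v 0‖ (‖z‖ + √(C / (1 - μ * L))), ?_⟩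
  rintro _ ⟨_ | n, rfl⟩
  · exact le_max_left _ _
  · refine le_max_of_le_right ((norm_le_norm_sub_add _ z).trans ?_)
    linarith [Real.le_sqrt_of_sq_le (hsq n)]

theorem tendsto_apply_sub_succ (hv : IsFRBSequence A B μ L v)
    (hΔ : Tendsto (fun n => v (n + 1) - v n) atTop (𝓝 0)) :
    Tendsto (fun n => A (v (n + 1)) - A (v n)) atTop (𝓝 0) :=
  squeeze_zero_norm (fun n => hv.lipschitz_A _ _) (by simpa using hΔ.norm.const_mul L)

theorem exists_tendsto_norm_sub (hv : IsFRBSequence A B μ L v)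
    (hΔ : Tendsto (fun n => v (n + 1) - v n) atTop (𝓝 0)) (hbdd : IsBounded (range v))
    (hz : -A z ∈ B z) : ∃ ℓ, Tendsto (fun n => ‖v n - z‖) atTop (𝓝 ℓ) := by
  obtain ⟨ℓ, hℓ⟩ := (hv.summable_and_exists_tendsto_frbEnergy hz).2
  have hinner := (tendsto_inner_sub_zero_of_isBounded (hv.tendsto_apply_sub_succ hΔ)
    (hbdd.subset (range_comp_subset_range (· + 1) v)) z).neg
  simp only [← inner_neg_right, neg_sub, neg_zero] at hinner
  have hrest : Tendsto (fun n => 2 * μ * ⟪A (v (n + 1)) - A (v n), z - v (n + 1)⟫ +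
      μ * L * ‖v (n + 1) - v n‖ ^ 2) atTop (𝓝 0) := by
    simpa using (hinner.const_mul (2 * μ)).add ((hΔ.norm.pow 2).const_mul (μ * L))
  have hsq : Tendsto (fun n => ‖v (n + 1) - z‖ ^ 2) atTop (𝓝 ℓ) := by
    have h := hℓ.sub hrest
    rw [sub_zero] at h
    exact h.congr fun n => by unfold frbEnergy; ring
  refine ⟨√ℓ, (tendsto_add_atTop_iff_nat 1).mp ?_⟩
  simpa only [Real.sqrt_sq (norm_nonneg _)] using hsq.sqrt

theorem tendsto_residual_add_apply (hv : IsFRBSequence A B μ L v)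
    (hΔ : Tendsto (fun n => v (n + 1) - v n) atTop (𝓝 0)) :
    Tendsto (fun n => frbResidual A μ (v n) (v (n + 1)) (v (n + 2)) + A (v (n + 2))) atTop
      (𝓝 0) := by
  have hAΔ := hv.tendsto_apply_sub_succ hΔ
  have hsplit (n : ℕ) : frbResidual A μ (v n) (v (n + 1)) (v (n + 2)) + A (v (n + 2)) =
      -((1 / μ) • (v (n + 2) - v (n + 1))) + (A (v (n + 2)) - A (v (n + 1))) -
        (A (v (n + 1)) - A (v n)) := by
    rw [frbResidual_eq hv.step_pos.ne', two_smul, ← smul_neg, neg_sub]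
    abel
  simp_rw [hsplit]
  simpa using ((((tendsto_add_atTop_iff_nat 1).mpr hΔ).const_smul (1 / μ)).neg.add
    ((tendsto_add_atTop_iff_nat 1).mpr hAΔ)).sub hAΔ

theorem neg_apply_mem_of_tendstoWeakly [CompleteSpace H] (hv : IsFRBSequence A B μ L v)
    (hB : IsMaximalMonotone B) (hΔ : Tendsto (fun n => v (n + 1) - v n) atTop (𝓝 0))
    (hbdd : IsBounded (range v)) {φ : ℕ → ℕ} (hφ : Tendsto φ atTop atTop) {u : H}
    (hu : TendstoWeakly (v ∘ φ) atTop u) : -A u ∈ B u := by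
  have hbdd₂ : IsBounded (range fun k => v (φ k + 2)) :=
    hbdd.subset (range_comp_subset_range (fun k => φ k + 2) v)
  have hΔ₂ : Tendsto (fun n => v (n + 2) - v n) atTop (𝓝 0) := by
    simpa using ((tendsto_add_atTop_iff_nat 1).mpr hΔ).add hΔ
  refine _root_.neg_apply_mem_of_tendstoWeakly hv.monotone_A hv.lipschitzWith.continuous hB
    (fun k => hv.residual_mem (φ k)) ((hv.tendsto_residual_add_apply hΔ).comp hφ) hbdd₂ ?_
    (hu.congr_tendsto_sub (hΔ₂.comp hφ))
  rw [range_comp]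
  exact hv.lipschitzWith.isBounded_image hbdd₂

end IsFRBSequence

end ForwardReflectedBackward

theorem forward_reflected_backward_weak_convergence_general
    {H : Type*} [NormedAddCommGroup H] [InnerProductSpace ℝ H] [CompleteSpace H]
    (A : H → H) (B : H → Set H) (L δ μ : ℝ)
    (hδ0 : 0 < δ) (hL : 0 < L)
    (hμl : δ ≤ μ) (hμu : μ ≤ (1 - 2 * δ) / (2 * L))
    (hA : ∀ x y : H, 0 ≤ (inner ℝ (A x - A y) (x - y) : ℝ))
    (hlip : ∀ x y : H, ‖A x - A y‖ ≤ L * ‖x - y‖)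
    (hBmono : ∀ x y u w : H, u ∈ B x → w ∈ B y → 0 ≤ (inner ℝ (u - w) (x - y) : ℝ))
    (hBmax : ∀ x u : H, (∀ y w : H, w ∈ B y → 0 ≤ (inner ℝ (u - w) (x - y) : ℝ)) → u ∈ B x)
    (hzero : ∃ z : H, -A z ∈ B z)
    (v : ℕ → H)
    (hres : ∀ n, 1 ≤ n →
      (1 / μ) • (v n - μ • ((2 : ℝ) • A (v n) - A (v (n - 1))) - v (n + 1)) ∈ B (v (n + 1))) :
    ∃ u : H, -A u ∈ B u ∧
      ∀ y : H, Tendsto (fun n => (inner ℝ (v n) y : ℝ)) atTop (nhds (inner ℝ u y : ℝ)) := by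
  have hμ : 0 < μ := hδ0.trans_le hμl
  have hμL : 2 * (μ * L) < 1 := by
    rw [le_div_iff₀ (by positivity)] at hμu
    linarith
  have hv : IsFRBSequence A B μ L v :=
    ⟨hA, hlip, hBmono, hμ, hL.le, hμL, fun n => hres (n + 1) le_add_self⟩
  obtain ⟨z, hz⟩ := hzero
  have hΔ := hv.tendsto_sub_succ hz
  have hbdd := hv.isBounded_range hz
  exact exists_tendstoWeakly_of_tendsto_norm_sub (S := {u | -A u ∈ B u}) ⟨z, hz⟩
    (fun _ hu => hv.exists_tendsto_norm_sub hΔ hbdd hu)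
    (fun _ _ hφ hu => hv.neg_apply_mem_of_tendstoWeakly ⟨hBmono, hBmax⟩ hΔ hbdd hφ.tendsto_atTop hu)

/-- Theorem 4.2 specialized to Hilbert space: weak convergence of the
forward-reflected-backward method. -/
theorem forward_reflected_backward_weak_convergence
    {H : Type*} [NormedAddCommGroup H] [InnerProductSpace ℝ H] [CompleteSpace H]
    (A : H → H) (B : H → Set H) (L δ μ : ℝ)
    (hδ0 : 0 < δ) (hδ1 : δ < 1 / 2) (hL : 0 < L)
    (hμl : δ ≤ μ) (hμu : μ ≤ (1 - 2 * δ) / (2 * L))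
    (hA : ∀ x y : H, 0 ≤ (inner ℝ (A x - A y) (x - y) : ℝ))
    (hlip : ∀ x y : H, ‖A x - A y‖ ≤ L * ‖x - y‖)
    (hBmono : ∀ x y u w : H, u ∈ B x → w ∈ B y → 0 ≤ (inner ℝ (u - w) (x - y) : ℝ))
    (hBmax : ∀ x u : H, (∀ y w : H, w ∈ B y → 0 ≤ (inner ℝ (u - w) (x - y) : ℝ)) → u ∈ B x)
    (hzero : ∃ z : H, -A z ∈ B z)
    (v : ℕ → H)
    (hres : ∀ n, 1 ≤ n →
      (1 / μ) • (v n - μ • ((2 : ℝ) • A (v n) - A (v (n - 1))) - v (n + 1)) ∈ B (v (n + 1))) :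
    ∃ u : H, -A u ∈ B u ∧
      ∀ y : H, Tendsto (fun n => (inner ℝ (v n) y : ℝ)) atTop (nhds (inner ℝ u y : ℝ)) :=
  forward_reflected_backward_weak_convergence_general A B L δ μ hδ0 hL hμl hμu hA hlip hBmono hBmax
    hzero v hres
end

section
/- Strongly monotone variant of Lemma 4.1: in a real Hilbert space, if B is maximal monotone and τ-strongly monotone, A is monotone, z ∈ (A+B)⁻¹(0), and v_{n+1} = (I+μB)⁻¹(v_n - μ(2Av_n - Av_{n-1})), then τμ‖v_{n+1} - z‖² ≤ ½‖z - v_n‖² - ½‖z - v_{n+1}‖² + μ⟨Av_n - Av_{n-1}, z - v_n⟩ + μ⟨Av_n - Av_{n-1}, v_n - v_{n+1}⟩ + μ⟨Av_n - Av_{n+1}, z - v_{n+1}⟩ - ½‖v_{n+1} - v_n‖². -/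
/-!
Test the strong monotonicity of `B` on the element of `B vₙ₊₁` produced by the resolvent step
and on `-A z ∈ B z`. The primal part of the resulting inner product
is expanded by the three-point identity; in the operator part, `2 A vₙ - A vₙ₋₁ - A z` is split as
`(A vₙ - A vₙ₋₁) + (A vₙ - A vₙ₊₁) + (A vₙ₊₁ - A z)`, and the last summand is discarded by
monotonicity of `A`.
-/

open scoped RealInnerProductSpace

section

variable {H : Type*} [NormedAddCommGroup H] [InnerProductSpace ℝ H]

theorem real_inner_sub_sub_eq_half_norm_sq (a b c : H) :
    ⟪a - b, b - c⟫ = (1 / 2) * ‖c - a‖ ^ 2 - (1 / 2) * ‖c - b‖ ^ 2 - (1 / 2) * ‖b - a‖ ^ 2 := by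
  have hca : c - a = -((a - b) + (b - c)) := by abel
  rw [hca, norm_neg, norm_add_sq_real, ← norm_neg (c - b), ← norm_neg (b - a), neg_sub, neg_sub]
  ring

theorem mul_mul_norm_sq_le_inner_of_smul_mem {B : H → Set H} {τ μ : ℝ} (hμ : 0 < μ)
    (hB : ∀ x y u w : H, u ∈ B x → w ∈ B y → τ * ‖x - y‖ ^ 2 ≤ ⟪u - w, x - y⟫)
    {d w y z : H} (hd : (1 / μ) • d ∈ B y) (hw : w ∈ B z) :
    τ * μ * ‖y - z‖ ^ 2 ≤ ⟪d - μ • w, y - z⟫ := by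
  have hscale : μ • ((1 / μ) • d - w) = d - μ • w := by
    rw [smul_sub, smul_smul, mul_one_div_cancel hμ.ne', one_smul]
  calc τ * μ * ‖y - z‖ ^ 2 = μ * (τ * ‖y - z‖ ^ 2) := by ring
    _ ≤ μ * ⟪(1 / μ) • d - w, y - z⟫ := mul_le_mul_of_nonneg_left (hB y z _ w hd hw) hμ.le
    _ = ⟪d - μ • w, y - z⟫ := by rw [← real_inner_smul_left, hscale]

theorem inner_reflected_difference_le {A : H → H} (hA : ∀ x y : H, 0 ≤ ⟪A x - A y, x - y⟫) (w x y z : H) :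
    ⟪A z - ((2 : ℝ) • A x - A w), y - z⟫ ≤
      ⟪A x - A w, z - x⟫ + ⟪A x - A w, x - y⟫ + ⟪A x - A y, z - y⟫ := by
  have hsplit : A z - ((2 : ℝ) • A x - A w) = -(A x - A w) - (A x - A y) - (A y - A z) := by
    rw [two_smul]; abel
  have hflip (p : H) : ⟪p, y - z⟫ = -⟪p, z - y⟫ := by rw [← inner_neg_right, neg_sub]
  have hzy : z - y = (z - x) + (x - y) := by abel
  have hmono := hA y z
  rw [hsplit, inner_sub_left, inner_sub_left, inner_neg_left, hflip (A x - A w),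
    hflip (A x - A y), hzy, inner_add_right]
  linarith

theorem reflected_resolvent_step_le {A : H → H} {B : H → Set H} {τ μ : ℝ}
    (hA : ∀ x y : H, 0 ≤ ⟪A x - A y, x - y⟫)
    (hB : ∀ x y u w : H, u ∈ B x → w ∈ B y → τ * ‖x - y‖ ^ 2 ≤ ⟪u - w, x - y⟫)
    (hμ : 0 < μ) {z : H} (hz : -A z ∈ B z) {w x y : H}
    (hstep : (1 / μ) • (x - μ • ((2 : ℝ) • A x - A w) - y) ∈ B y) :
    τ * μ * ‖y - z‖ ^ 2 ≤
      (1 / 2) * ‖z - x‖ ^ 2 - (1 / 2) * ‖z - y‖ ^ 2 + μ * ⟪A x - A w, z - x⟫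
        + μ * ⟪A x - A w, x - y⟫ + μ * ⟪A x - A y, z - y⟫ - (1 / 2) * ‖y - x‖ ^ 2 := by
  have hsplit : x - μ • ((2 : ℝ) • A x - A w) - y - μ • -A z
      = (x - y) + μ • (A z - ((2 : ℝ) • A x - A w)) := by
    rw [smul_sub μ (A z), smul_neg]; abel
  have hmain := mul_mul_norm_sq_le_inner_of_smul_mem hμ hB hstep hz
  rw [hsplit, inner_add_left, real_inner_smul_left, real_inner_sub_sub_eq_half_norm_sq] at hmain
  have hA_part := mul_le_mul_of_nonneg_left (inner_reflected_difference_le hA w x y z) hμ.le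
  linarith
end

theorem lemma413_strongly_monotone_B_general
    {H : Type*} [NormedAddCommGroup H] [InnerProductSpace ℝ H]
    (A : H → H) (B : H → Set H) (τ : ℝ)
    (hA : ∀ x y : H, 0 ≤ (inner ℝ (A x - A y) (x - y) : ℝ))
    (hBstrong : ∀ x y u w : H, u ∈ B x → w ∈ B y →
      τ * ‖x - y‖ ^ 2 ≤ (inner ℝ (u - w) (x - y) : ℝ))
    (μ : ℝ) (hμ : 0 < μ) (z : H) (hz : -A z ∈ B z)
    (v : ℕ → H)
    (hres : ∀ n, 1 ≤ n →
      (1 / μ) • (v n - μ • ((2 : ℝ) • A (v n) - A (v (n - 1))) - v (n + 1)) ∈ B (v (n + 1))) :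
    ∀ n, 1 ≤ n →
      τ * μ * ‖v (n + 1) - z‖ ^ 2 ≤
        (1 / 2) * ‖z - v n‖ ^ 2 - (1 / 2) * ‖z - v (n + 1)‖ ^ 2
          + μ * (inner ℝ (A (v n) - A (v (n - 1))) (z - v n) : ℝ)
          + μ * (inner ℝ (A (v n) - A (v (n - 1))) (v n - v (n + 1)) : ℝ)
          + μ * (inner ℝ (A (v n) - A (v (n + 1))) (z - v (n + 1)) : ℝ)
          - (1 / 2) * ‖v (n + 1) - v n‖ ^ 2 :=
  fun n hn => reflected_resolvent_step_le hA hBstrong hμ hz (hres n hn)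

/-- Lemma 4.13 (case (a)) specialized to Hilbert space: the strongly monotone
variant of Lemma 4.1. -/
theorem lemma413_strongly_monotone_B
    {H : Type*} [NormedAddCommGroup H] [InnerProductSpace ℝ H]
    (A : H → H) (B : H → Set H) (τ : ℝ) (hτ : 0 < τ)
    (hA : ∀ x y : H, 0 ≤ (inner ℝ (A x - A y) (x - y) : ℝ))
    (hBstrong : ∀ x y u w : H, u ∈ B x → w ∈ B y →
      τ * ‖x - y‖ ^ 2 ≤ (inner ℝ (u - w) (x - y) : ℝ))
    (hBmax : ∀ x u : H, (∀ y w : H, w ∈ B y → 0 ≤ (inner ℝ (u - w) (x - y) : ℝ)) → u ∈ B x)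
    (μ : ℝ) (hμ : 0 < μ) (z : H) (hz : -A z ∈ B z)
    (v : ℕ → H)
    (hres : ∀ n, 1 ≤ n →
      (1 / μ) • (v n - μ • ((2 : ℝ) • A (v n) - A (v (n - 1))) - v (n + 1)) ∈ B (v (n + 1))) :
    ∀ n, 1 ≤ n →
      τ * μ * ‖v (n + 1) - z‖ ^ 2 ≤
        (1 / 2) * ‖z - v n‖ ^ 2 - (1 / 2) * ‖z - v (n + 1)‖ ^ 2
          + μ * (inner ℝ (A (v n) - A (v (n - 1))) (z - v n) : ℝ)
          + μ * (inner ℝ (A (v n) - A (v (n - 1))) (v n - v (n + 1)) : ℝ)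
          + μ * (inner ℝ (A (v n) - A (v (n + 1))) (z - v (n + 1)) : ℝ)
          - (1 / 2) * ‖v (n + 1) - v n‖ ^ 2 :=
  lemma413_strongly_monotone_B_general A B τ hA hBstrong μ hμ z hz v hres
end
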